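/- arXiv:0906.0651 — 3 statements merged into one kernel-verified Lean document; each statement's English description precedes it below -/
import Mathlib

section
/- Let f, n, m be natural numbers with n > 3f and m ≥ n − f. Let P be a multiset of real numbers with card P = n and let U be a sub-multiset of P with card U = m. Then for every x ∈ U, the range of the trimmed multiset trim_f^x(P) is contained in the range of the correct positions: min U ≤ min(x, P_(f+1)) and max(x, P_(n−f)) ≤ max U, i.e. [min(x, P_(f+1)), max(x, P_(n−f))] ⊆ [min U, max U]. -/
/-- The k-th smallest element (1-indexed, counted with multiplicity) of a
multiset of real numbers. -/
noncomputable def nth (S : Multiset ℝ) (k : ℕ) : ℝ :=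
  (S.sort (· ≤ ·)).getD (k - 1) 0

/-- The smallest element of a (nonempty) multiset of reals. -/
noncomputable def mmin (S : Multiset ℝ) : ℝ := nth S 1

/-- The largest element of a (nonempty) multiset of reals. -/
noncomputable def mmax (S : Multiset ℝ) : ℝ := nth S S.card

/-- The diameter of a (nonempty) multiset of reals. -/
noncomputable def mdiam (S : Multiset ℝ) : ℝ := mmax S - mmin S

/-! If `P_(k+1) < min U`, the `k + 1` smallest elements of `P` all lie below `min U`, hence in
`P - U`, which has only `card P - card U` elements; with `k = f` and `n - m ≤ f` this is impossible.
Dually, if `max U < P_(k+1)`, the `card P - k` largest elements of `P` lie in `P - U`, which is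
impossible once `k < card U`; take `k = n - f - 1 < m`. -/

namespace Multiset

theorem card_filter_le_card_sub {α : Type*} [DecidableEq α] {p : α → Prop} [DecidablePred p]
    {U P : Multiset α} (hU : U ≤ P) (hp : ∀ a ∈ U, ¬p a) : card (P.filter p) ≤ card P - card U := by
  have hfilter : P.filter p = (P - U).filter p := by
    rw [← tsub_add_cancel_of_le hU, filter_add, filter_eq_nil.mpr hp, add_zero,
      add_tsub_cancel_right]
  rw [hfilter, ← card_sub hU]
  exact card_le_card (filter_le _ _)

end Multiset

open Multiset

theorem nth_succ_eq_getElem {S : Multiset ℝ} {k : ℕ} (hk : k < card S) :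
    nth S (k + 1) = (S.sort (· ≤ ·))[k]'(by rwa [length_sort]) :=
  List.getD_eq_getElem _ _ _

theorem mmin_le {S : Multiset ℝ} {x : ℝ} (hx : x ∈ S) : mmin S ≤ x := by
  have hS : 0 < card S := card_pos_iff_exists_mem.mpr ⟨x, hx⟩
  obtain ⟨i, hi, rfl⟩ := List.mem_iff_getElem.mp ((mem_sort (r := (· ≤ ·))).mpr hx)
  rw [mmin, nth_succ_eq_getElem hS]
  exact (pairwise_sort S _).rel_get_of_le (Nat.zero_le i)

theorem le_mmax {S : Multiset ℝ} {x : ℝ} (hx : x ∈ S) : x ≤ mmax S := by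
  have hS : 0 < card S := card_pos_iff_exists_mem.mpr ⟨x, hx⟩
  obtain ⟨i, hi, rfl⟩ := List.mem_iff_getElem.mp ((mem_sort (r := (· ≤ ·))).mpr hx)
  rw [mmax, ← Nat.sub_one_add_one hS.ne', nth_succ_eq_getElem (Nat.sub_lt hS one_pos)]
  exact (pairwise_sort S _).rel_get_of_le (by simp [length_sort] at hi ⊢; omega)

theorem succ_le_card_filter_le_nth {S : Multiset ℝ} {k : ℕ} (hk : k < card S) :
    k + 1 ≤ card (S.filter (· ≤ nth S (k + 1))) := by
  set l := S.sort (· ≤ ·)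
  have hl : k < l.length := by rwa [length_sort]
  have htake : (l.take (k + 1) : Multiset ℝ) ≤ S.filter (· ≤ nth S (k + 1)) := by
    refine le_filter.mpr ⟨?_, fun a ha => ?_⟩
    · conv_rhs => rw [← sort_eq S (· ≤ ·)]
      exact coe_le.mpr (List.take_sublist _ _).subperm
    · obtain ⟨i, hi, rfl⟩ := List.mem_iff_getElem.mp (mem_coe.mp ha)
      rw [List.getElem_take, nth_succ_eq_getElem hk]
      exact (pairwise_sort S _).rel_get_of_le (by simp at hi ⊢; omega)
  simpa [Nat.min_eq_left (Nat.succ_le_of_lt hl)] using card_le_card htake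

theorem card_sub_le_card_filter_nth_le {S : Multiset ℝ} {k : ℕ} (hk : k < card S) :
    card S - k ≤ card (S.filter (nth S (k + 1) ≤ ·)) := by
  set l := S.sort (· ≤ ·)
  have hdrop : (l.drop k : Multiset ℝ) ≤ S.filter (nth S (k + 1) ≤ ·) := by
    refine le_filter.mpr ⟨?_, fun a ha => ?_⟩
    · conv_rhs => rw [← sort_eq S (· ≤ ·)]
      exact coe_le.mpr (List.drop_sublist _ _).subperm
    · obtain ⟨i, hi, rfl⟩ := List.mem_iff_getElem.mp (mem_coe.mp ha)
      rw [List.getElem_drop, nth_succ_eq_getElem hk]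
      exact (pairwise_sort S _).rel_get_of_le (by simp)
  simpa [l] using card_le_card hdrop

theorem mmin_le_nth {P U : Multiset ℝ} {k : ℕ} (hU : U ≤ P) (hk : k < card P)
    (hPU : card P - card U ≤ k) : mmin U ≤ nth P (k + 1) := by
  by_contra! hlt
  have := (succ_le_card_filter_le_nth hk).trans <|
    card_filter_le_card_sub hU fun a ha h => (h.trans_lt hlt).not_ge (mmin_le ha)
  omega

theorem nth_le_mmax {P U : Multiset ℝ} {k : ℕ} (hU : U ≤ P) (hk : k < card U) :
    nth P (k + 1) ≤ mmax U := by
  by_contra! hlt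
  have hkP : k < card P := hk.trans_le (card_le_card hU)
  have := (card_sub_le_card_filter_nth_le hkP).trans <|
    card_filter_le_card_sub hU fun a ha h => (hlt.trans_le h).not_ge (le_mmax ha)
  omega

theorem stmt2 (f n m : ℕ) (P U : Multiset ℝ)
    (hn : n > 3 * f) (hm : m ≥ n - f)
    (hP : Multiset.card P = n) (hU : U ≤ P) (hUm : Multiset.card U = m) :
    ∀ x ∈ U,
      mmin U ≤ min x (nth P (f + 1)) ∧ max x (nth P (n - f)) ≤ mmax U := by
  intro x hx
  have hmn : m ≤ n := hP ▸ hUm ▸ card_le_card hU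
  refine ⟨le_min (mmin_le hx) (mmin_le_nth hU (by omega) (by omega)),
    max_le (le_mmax hx) ?_⟩
  rw [show n - f = (n - f - 1) + 1 by omega]
  exact nth_le_mmax hU (by omega)
end

section
/- Let f, n, m be natural numbers with n > 3f and m ≥ n − f. Let P be a multiset of real numbers with card P = n and let U be a sub-multiset of P with card U = m. Then the range of the symmetrically trimmed correct positions is contained in the range of the symmetrically trimmed observed positions: P_(f+1) ≤ U_(f+1) and U_(m−f) ≤ P_(n−f), i.e. [U_(f+1), U_(m−f)] ⊆ [P_(f+1), P_(n−f)]. -/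
/-! The sorted list of `U ≤ P` is a sublist of that of `P`. Its `i`-th entry sits at some index
`j` of the sorted list of `P`, and since a sublist embedding is strictly monotone,
`i ≤ j ≤ i + (card P - card U)`; sortedness turns these index bounds into the two inequalities. -/

namespace List

variable {α : Type*}

theorem Sublist.exists_getElem_eq_of_le {l l' : List α} (h : l <+ l') {i : ℕ}
    (hi : i < l.length) :
    ∃ (j : ℕ) (hj : j < l'.length), i ≤ j ∧ j ≤ i + (l'.length - l.length) ∧ l'[j] = l[i] := by
  obtain ⟨g, hg⟩ := sublist_iff_exists_orderEmbedding_getElem?_eq.mp h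
  have hg_get : ∀ {k} (hk : k < l.length), ∃ hk' : g k < l'.length, l'[g k] = l[k] := by
    intro k hk
    have := hg k
    rwa [getElem?_eq_getElem hk, eq_comm, getElem?_eq_some_iff] at this
  have hlast : l.length - 1 - i + g i ≤ g (l.length - 1) := by
    have := g.strictMono.add_le_nat (l.length - 1 - i) i
    rwa [show l.length - 1 - i + i = l.length - 1 by omega] at this
  obtain ⟨hlast_lt, -⟩ := hg_get (show l.length - 1 < l.length by omega)
  obtain ⟨hj, hget⟩ := hg_get hi
  exact ⟨g i, hj, g.strictMono.le_apply, by omega, hget⟩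

theorem SortedLE.getElem_le_getElem_of_sublist [Preorder α] {l l' : List α} (hl' : l'.SortedLE)
    (h : l <+ l') {i : ℕ} (hi : i < l.length) :
    l'[i]'(hi.trans_le h.length_le) ≤ l[i] ∧
      l[i] ≤ l'[i + (l'.length - l.length)]'(by have := h.length_le; omega) := by
  obtain ⟨j, hj, hij, hji, hget⟩ := h.exists_getElem_eq_of_le hi
  rw [← hget]
  exact ⟨hl'.getElem_le_getElem_of_le hij, hl'.getElem_le_getElem_of_le hji⟩

end List

theorem Multiset.sort_sublist_sort_of_le {α : Type*} [LinearOrder α] {s t : Multiset α}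
    (h : s ≤ t) : (s.sort (· ≤ ·)).Sublist (t.sort (· ≤ ·)) := by
  refine List.sublist_of_subperm_of_sortedLE ?_ (s.pairwise_sort _).sortedLE
    (t.pairwise_sort _).sortedLE
  rwa [← Multiset.coe_le, Multiset.sort_eq, Multiset.sort_eq]

theorem nth_succ_eq_getElem_s5 {S : Multiset ℝ} {i : ℕ} (hi : i < (S.sort (· ≤ ·)).length) :
    nth S (i + 1) = (S.sort (· ≤ ·))[i] :=
  List.getD_eq_getElem _ _ hi

theorem nth_le_nth_of_le {U P : Multiset ℝ} (h : U ≤ P) {i : ℕ} (hi : i < Multiset.card U) :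
    nth P (i + 1) ≤ nth U (i + 1) ∧
      nth U (i + 1) ≤ nth P (i + 1 + (Multiset.card P - Multiset.card U)) := by
  have hsub := Multiset.sort_sublist_sort_of_le h
  have hiU : i < (U.sort (· ≤ ·)).length := by rwa [Multiset.length_sort]
  have key := (P.pairwise_sort _).sortedLE.getElem_le_getElem_of_sublist hsub hiU
  simp only [Multiset.length_sort] at key
  rwa [Nat.add_right_comm, nth_succ_eq_getElem_s5, nth_succ_eq_getElem_s5, nth_succ_eq_getElem_s5]

theorem stmt5 (f n m : ℕ) (P U : Multiset ℝ)
    (hn : n > 3 * f) (hm : m ≥ n - f)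
    (hP : Multiset.card P = n) (hU : U ≤ P) (hUm : Multiset.card U = m) :
    nth P (f + 1) ≤ nth U (f + 1) ∧ nth U (m - f) ≤ nth P (n - f) := by
  have hmn : m ≤ n := hUm ▸ hP ▸ Multiset.card_le_card hU
  have hlow := (nth_le_nth_of_le hU (i := f) (by omega)).1
  have hupp := (nth_le_nth_of_le hU (i := m - f - 1) (by omega)).2
  rw [hP, hUm, show m - f - 1 + 1 + (n - m) = n - f by omega, show m - f - 1 + 1 = m - f by omega]
    at hupp
  exact ⟨hlow, hupp⟩
end

section
/- Let f, n, m be natural numbers with n > 3f and m ≥ n − f. Let P be a multiset of real numbers with card P = n and let U be a sub-multiset of P with card U = m. Suppose there exists a sub-multiset S of U with card S = f + 1 all of whose elements are at most a real number s. Then for every x ∈ U, the destination D(x, P) = (min(x, P_(f+1)) + max(x, P_(n−f)))/2 satisfies D(x, P) ≤ (s + max U)/2. -/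
/-! The robots' destinations are controlled by one order-statistic fact: if at least `k` robots sit
at positions `≤ c`, then `P_(k) ≤ c`. The `f + 1` correct robots at positions `≤ s` give
`P_(f+1) ≤ s`, hence `min(x, P_(f+1)) ≤ s`; the `m ≥ n - f` correct robots, all at positions
`≤ max U`, give `P_(n-f) ≤ max U`, hence `max(x, P_(n-f)) ≤ max U`. -/

theorem List.Pairwise.length_filter_le_of_lt_getElem {α : Type*} [LinearOrder α] {l : List α}
    (hl : l.Pairwise (· ≤ ·)) {i : ℕ} (hi : i < l.length) {c : α} (hc : c < l[i]) :
    (l.filter (· ≤ c)).length ≤ i := by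
  have hdrop : (l.drop i).filter (· ≤ c) = [] := by
    have hsorted := hl.drop (i := i)
    rw [List.drop_eq_getElem_cons hi, List.pairwise_cons] at hsorted
    rw [List.drop_eq_getElem_cons hi, List.filter_eq_nil_iff]
    rintro a (_ | ⟨_, ha⟩)
    · simpa using hc
    · simpa using hc.trans_le (hsorted.1 a ha)
  calc (l.filter (· ≤ c)).length
      = ((l.take i).filter (· ≤ c)).length := by
        conv_lhs => rw [← List.take_append_drop i l, List.filter_append, hdrop, List.append_nil]
    _ ≤ (l.take i).length := List.length_filter_le _ _
    _ ≤ i := List.length_take_le _ _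

theorem nth_eq_getElem_sort {P : Multiset ℝ} {k : ℕ} (hk : k - 1 < Multiset.card P) :
    nth P k = (P.sort (· ≤ ·))[k - 1]'(by rwa [Multiset.length_sort]) :=
  List.getD_eq_getElem _ _ _

theorem nth_le_of_le_card_filter {P : Multiset ℝ} {k : ℕ} {c : ℝ} (hk : 1 ≤ k)
    (hkc : k ≤ Multiset.card (P.filter (· ≤ c))) : nth P k ≤ c := by
  have hkP : k - 1 < Multiset.card P := by
    have := Multiset.card_le_card (Multiset.filter_le (· ≤ c) P)
    omega
  rw [nth_eq_getElem_sort hkP]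
  by_contra! hlt
  have hcount := (P.pairwise_sort (· ≤ ·)).length_filter_le_of_lt_getElem _ hlt
  conv at hkc => rw [← P.sort_eq (· ≤ ·), Multiset.filter_coe, Multiset.coe_card]
  omega

theorem nth_le_of_le_of_forall_le {P T : Multiset ℝ} {k : ℕ} {c : ℝ} (hTP : T ≤ P) (hk : 1 ≤ k)
    (hkT : k ≤ Multiset.card T) (hTc : ∀ y ∈ T, y ≤ c) : nth P k ≤ c := by
  refine nth_le_of_le_card_filter hk (hkT.trans ?_)
  rw [← Multiset.filter_eq_self.2 hTc]
  exact Multiset.card_le_card (Multiset.filter_le_filter _ hTP)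

theorem le_mmax_of_mem {U : Multiset ℝ} {x : ℝ} (hx : x ∈ U) : x ≤ mmax U := by
  obtain ⟨i, hi, rfl⟩ := List.getElem_of_mem ((U.mem_sort (· ≤ ·)).2 hx)
  have hiU : i < Multiset.card U := by rwa [Multiset.length_sort] at hi
  rw [mmax, nth_eq_getElem_sort (by omega)]
  exact (U.pairwise_sort (· ≤ ·)).rel_get_of_le (a := ⟨i, hi⟩) (b := ⟨_, _⟩)
    (Fin.mk_le_mk.2 (by omega))

theorem stmt8_general (f n m : ℕ) (P U : Multiset ℝ) (s : ℝ)
    (hn : n > 3 * f) (hm : m ≥ n - f)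
    (hU : U ≤ P) (hUm : Multiset.card U = m)
    (hS : ∃ S : Multiset ℝ, S ≤ U ∧ Multiset.card S = f + 1 ∧ ∀ y ∈ S, y ≤ s) :
    ∀ x ∈ U,
      (min x (nth P (f + 1)) + max x (nth P (n - f))) / 2 ≤ (s + mmax U) / 2 := by
  intro x hx
  obtain ⟨S, hSU, hScard, hSs⟩ := hS
  have hlow : nth P (f + 1) ≤ s :=
    nth_le_of_le_of_forall_le (hSU.trans hU) (by omega) hScard.ge hSs
  have hhigh : nth P (n - f) ≤ mmax U :=
    nth_le_of_le_of_forall_le hU (by omega) (by omega) fun _ => le_mmax_of_mem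
  have hmin : min x (nth P (f + 1)) ≤ s := (min_le_right _ _).trans hlow
  have hmax : max x (nth P (n - f)) ≤ mmax U := max_le (le_mmax_of_mem hx) hhigh
  linarith

theorem stmt8 (f n m : ℕ) (P U : Multiset ℝ) (s : ℝ)
    (hn : n > 3 * f) (hm : m ≥ n - f)
    (hP : Multiset.card P = n) (hU : U ≤ P) (hUm : Multiset.card U = m)
    (hS : ∃ S : Multiset ℝ, S ≤ U ∧ Multiset.card S = f + 1 ∧ ∀ y ∈ S, y ≤ s) :
    ∀ x ∈ U,
      (min x (nth P (f + 1)) + max x (nth P (n - f))) / 2 ≤ (s + mmax U) / 2 :=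
  stmt8_general f n m P U s hn hm hU hUm hS
end
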